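/- arXiv:1611.00743 — 4 statements merged into one kernel-verified Lean document; each statement's English description precedes it below -/
import Mathlib

section
/- Let λ ∈ (0, 1/2), let ε > 0 and let r > 0. Then |φ_ε(r) − φ_0(r)| ≤ (λ / ((1 − 2λ) √c_λ)) · ε^{1−2λ} / r. -/
/-!
Put `A = c_λ r²`. Then `φ_0(r) - φ_ε(r) = A^{-λ} - (ε² + A)^{-λ}` is the decrease of `t ↦ (t² + A)^{-λ}`
on `[0, ε]`. By AM-GM, `t² + A ≥ 2t√A`, so the derivative of this function is bounded in absolute value
by `(λ/√A) t^{-2λ}`, whose integral over `[0, ε]` is `λ ε^{1-2λ} / ((1 - 2λ)√A)`; finally `√A = √c_λ r`.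
-/

open Real Set

section

variable {A lam : ℝ}

lemma hasDerivAt_sq_add_const_rpow (hA : 0 < A) (p t : ℝ) :
    HasDerivAt (fun t : ℝ => (t ^ 2 + A) ^ p) (p * (t ^ 2 + A) ^ (p - 1) * (2 * t)) t := by
  have hsq : HasDerivAt (fun t : ℝ => t ^ 2 + A) (2 * t) t := by
    simpa using (hasDerivAt_pow 2 t).add_const A
  convert hsq.rpow_const (p := p) (Or.inl (by positivity)) using 1
  ring

lemma mul_sq_add_const_rpow_le (hA : 0 < A) (hlam : 0 ≤ lam) {t : ℝ} (ht : 0 < t) :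
    lam * (t ^ 2 + A) ^ (-lam - 1) * (2 * t) ≤ lam / √A * t ^ (-(2 * lam)) := by
  have hpos : 0 < t ^ 2 + A := by positivity
  have hsqrtA : 0 < √A := sqrt_pos.mpr hA
  have hpow : (t ^ 2 + A) ^ (-lam) ≤ t ^ (-(2 * lam)) := by
    rw [← mul_neg, rpow_mul ht.le, rpow_two]
    exact rpow_le_rpow_of_nonpos (by positivity) (by linarith) (by linarith)
  have hamgm : 2 * t / (t ^ 2 + A) ≤ 1 / √A := by
    rw [div_le_div_iff₀ hpos hsqrtA]
    nlinarith [sq_nonneg (t - √A), sq_sqrt hA.le]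
  calc lam * (t ^ 2 + A) ^ (-lam - 1) * (2 * t)
      = lam * ((t ^ 2 + A) ^ (-lam) * (2 * t / (t ^ 2 + A))) := by
        rw [rpow_sub_one hpos.ne']; ring
    _ ≤ lam * (t ^ (-(2 * lam)) * (1 / √A)) := by gcongr
    _ = lam / √A * t ^ (-(2 * lam)) := by ring

theorem rpow_neg_sub_sq_add_rpow_neg_le (hA : 0 < A) (h0 : 0 ≤ lam) (h1 : lam < 1 / 2)
    {ε : ℝ} (hε : 0 ≤ ε) :
    A ^ (-lam) - (ε ^ 2 + A) ^ (-lam) ≤ lam / ((1 - 2 * lam) * √A) * ε ^ (1 - 2 * lam) := by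
  have h12 : 0 < 1 - 2 * lam := by linarith
  set K := lam / ((1 - 2 * lam) * √A)
  have hK : K * (1 - 2 * lam) = lam / √A := by
    simp only [K]
    rw [mul_comm (1 - 2 * lam), ← div_div, div_mul_cancel₀ _ h12.ne']
  set F : ℝ → ℝ := fun t => K * t ^ (1 - 2 * lam) + (t ^ 2 + A) ^ (-lam)
  have hF : ∀ t, 0 < t → HasDerivAt F
      (K * ((1 - 2 * lam) * t ^ (1 - 2 * lam - 1)) + -lam * (t ^ 2 + A) ^ (-lam - 1) * (2 * t)) t :=
    fun t ht => ((hasDerivAt_rpow_const (Or.inl ht.ne')).const_mul K).add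
      (hasDerivAt_sq_add_const_rpow hA (-lam) t)
  have hcont : ContinuousOn F (Icc 0 ε) :=
    ((continuousOn_id.rpow_const fun _ _ => Or.inr h12.le).const_smul K).add
      (((continuousOn_pow 2).add continuousOn_const).rpow_const fun t _ => Or.inl (by positivity : t ^ 2 + A ≠ 0))
  have hmono : MonotoneOn F (Icc 0 ε) := by
    refine monotoneOn_of_deriv_nonneg (convex_Icc 0 ε) hcont ?_ ?_ <;> rw [interior_Icc]
    · exact fun t ht => (hF t ht.1).differentiableAt.differentiableWithinAt
    · intro t ht
      rw [(hF t ht.1).deriv, show 1 - 2 * lam - 1 = -(2 * lam) by ring, ← mul_assoc, hK]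
      linarith [mul_sq_add_const_rpow_le hA h0 ht.1]
  have hF0 : F 0 = A ^ (-lam) := by simp [F, zero_rpow h12.ne']
  have := hmono (left_mem_Icc.mpr hε) (right_mem_Icc.mpr hε) hε
  simp only [hF0, F] at this
  linarith

theorem abs_sq_add_rpow_neg_sub_rpow_neg_le (hA : 0 < A) (h0 : 0 ≤ lam) (h1 : lam < 1 / 2)
    {ε : ℝ} (hε : 0 ≤ ε) :
    |(ε ^ 2 + A) ^ (-lam) - A ^ (-lam)| ≤ lam / ((1 - 2 * lam) * √A) * ε ^ (1 - 2 * lam) := by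
  have hle : (ε ^ 2 + A) ^ (-lam) ≤ A ^ (-lam) :=
    rpow_le_rpow_of_nonpos hA (by nlinarith) (by linarith)
  rw [abs_sub_comm, abs_of_nonneg (sub_nonneg.mpr hle)]
  exact rpow_neg_sub_sq_add_rpow_neg_le hA h0 h1 hε

end

lemma rpow_neg_mul_rpow_neg_two_mul {c r : ℝ} (hc : 0 ≤ c) (hr : 0 ≤ r) (lam : ℝ) :
    c ^ (-lam) * r ^ (-(2 * lam)) = (c * r ^ 2) ^ (-lam) := by
  rw [mul_rpow hc (by positivity), ← rpow_natCast, ← rpow_mul hr]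
  ring_nf

/-- Lemma 3.1, part (3): for `λ ∈ (0, 1/2)`, `ε > 0`, `r > 0`,
`|φ_ε(r) − φ_0(r)| ≤ (λ / ((1 − 2λ) √c_λ)) ε^{1-2λ} / r`, where
`φ_ε(r) = (ε² + c_λ r²)^{-λ}`, `φ_0(r) = c_λ^{-λ} r^{-2λ}` and `c_λ = 2^{1/λ} - 1`. -/
theorem stmt_1 (lam : ℝ) (hlam : lam ∈ Set.Ioo (0 : ℝ) (1 / 2))
    (ε r : ℝ) (hε : 0 < ε) (hr : 0 < r) :
    |(ε ^ 2 + ((2 : ℝ) ^ (1 / lam) - 1) * r ^ 2) ^ (-lam)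
        - ((2 : ℝ) ^ (1 / lam) - 1) ^ (-lam) * r ^ (-(2 * lam))|
      ≤ lam / ((1 - 2 * lam) * Real.sqrt ((2 : ℝ) ^ (1 / lam) - 1))
          * ε ^ (1 - 2 * lam) / r := by
  obtain ⟨h0, h1⟩ := hlam
  set c := (2 : ℝ) ^ (1 / lam) - 1
  have hc : 0 < c := sub_pos.mpr (one_lt_rpow one_lt_two (by positivity))
  have hsqrt : √(c * r ^ 2) = √c * r := by rw [sqrt_mul hc.le, sqrt_sq hr.le]
  have := abs_sq_add_rpow_neg_sub_rpow_neg_le (by positivity : 0 < c * r ^ 2) h0.le h1 hε.le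
  rw [hsqrt] at this
  rw [rpow_neg_mul_rpow_neg_two_mul hc.le hr.le]
  convert this using 1
  field_simp
end

section
/- Let N ≥ 1 and let (μ_n) be a sequence of finite signed Borel measures on ℝ^N converging weakly-star to a finite signed Borel measure μ, i.e. ∫ f dμ_n → ∫ f dμ for every continuous f : ℝ^N → ℝ vanishing at infinity. Let C ⊆ ℝ^N be a closed set and for R > 0 let Ω_R = {x ∈ ℝ^N : dist(x, C) < R}. Assume the measures do not concentrate near C, in the sense that for every δ > 0 there exists R > 0 with limsup_{n→∞} |μ_n|(Ω_R) ≤ δ, where |μ_n| is the total variation measure of μ_n. Then ∫ φ dμ_n → ∫ φ dμ for every bounded Borel measurable φ : ℝ^N → ℝ that vanishes at infinity (for every δ > 0 there is a compact set K with |φ(x)| ≤ δ for all x ∉ K) and whose set of discontinuity points is contained in C. -/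
/-!
Cut `φ` off near `C`: `ψ = φ · min (d(·, C) / R) 1` is continuous and vanishes at infinity, so
`∫ ψ dμₙ → ∫ ψ dμ`, while `φ - ψ` is bounded by `sup |φ|` and supported in `Ω_R`, so it costs at
most `sup |φ| · |ν|(Ω_R)` for every `ν`. For `ν = μₙ` this is eventually small by hypothesis; for
`ν = μ` it is small because `|μ|(U) ≤ limsup |μₙ|(U)` for open `U`. That inequality, and the
boundedness of `|μₙ|(X)` (Banach–Steinhaus on `C₀`) without which the real `limsup` in the
hypothesis would be a junk value, both come from approximating `|ν|(U)` by `∫ f dν` with `f`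
continuous, compactly supported in `U` and `|f| ≤ 1`, built from a Hahn decomposition and
Urysohn functions.
-/

open MeasureTheory Filter

/-- The integral of a real function against a finite signed Borel measure,
via the Jordan decomposition. -/
noncomputable def signedIntegral {α : Type*} [MeasurableSpace α]
    (μ : MeasureTheory.SignedMeasure α) (f : α → ℝ) : ℝ :=
  (∫ x, f x ∂μ.toJordanDecomposition.posPart)
    - ∫ x, f x ∂μ.toJordanDecomposition.negPart

open Set Topology Metric ZeroAtInfty

section SignedIntegral

variable {α : Type*} [MeasurableSpace α] {f g : α → ℝ}

lemma abs_integral_le_mul_measureReal {p : Measure α} [IsFiniteMeasure p] {M : ℝ}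
    (hM : ∀ x, |f x| ≤ M) {s : Set α} (hs : Function.support f ⊆ s) :
    |∫ x, f x ∂p| ≤ M * p.real s := by
  rw [← setIntegral_eq_integral_of_forall_compl_eq_zero fun x hx => Function.notMem_support.1
    (mt (@hs x) hx), ← Real.norm_eq_abs]
  exact norm_setIntegral_le_of_norm_le_const (measure_lt_top p s) fun x _ => hM x

variable (ν : SignedMeasure α)

lemma MeasureTheory.SignedMeasure.totalVariation_real_eq (s : Set α) :
    ν.totalVariation.real s =
      ν.toJordanDecomposition.posPart.real s + ν.toJordanDecomposition.negPart.real s := by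
  rw [SignedMeasure.totalVariation, measureReal_add_apply]

lemma signedIntegral_sub (hf : Integrable f ν.totalVariation)
    (hg : Integrable g ν.totalVariation) :
    signedIntegral ν (f - g) = signedIntegral ν f - signedIntegral ν g := by
  rw [SignedMeasure.totalVariation, integrable_add_measure] at hf hg
  simp only [signedIntegral, Pi.sub_apply, integral_sub hf.1 hg.1, integral_sub hf.2 hg.2]
  ring

lemma signedIntegral_add (hf : Integrable f ν.totalVariation)
    (hg : Integrable g ν.totalVariation) :
    signedIntegral ν (f + g) = signedIntegral ν f + signedIntegral ν g := by
  rw [SignedMeasure.totalVariation, integrable_add_measure] at hf hg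
  simp only [signedIntegral, Pi.add_apply, integral_add hf.1 hg.1, integral_add hf.2 hg.2]
  ring

lemma signedIntegral_const_mul (c : ℝ) :
    signedIntegral ν (fun x => c * f x) = c * signedIntegral ν f := by
  simp only [signedIntegral, integral_const_mul, mul_sub]

lemma abs_signedIntegral_le {M : ℝ} (hM : ∀ x, |f x| ≤ M) {s : Set α}
    (hs : Function.support f ⊆ s) :
    |signedIntegral ν f| ≤ M * ν.totalVariation.real s := by
  rw [SignedMeasure.totalVariation_real_eq, mul_add]
  exact (abs_sub _ _).trans (add_le_add (abs_integral_le_mul_measureReal hM hs)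
    (abs_integral_le_mul_measureReal hM hs))

end SignedIntegral

section Bump

variable {α : Type*} [TopologicalSpace α] [T2Space α] [RegularSpace α] [LocallyCompactSpace α]
  [MeasurableSpace α] [OpensMeasurableSpace α]

lemma exists_continuous_integral_sub_integral_ge {p q : Measure α} [IsFiniteMeasure p]
    [IsFiniteMeasure q] [p.InnerRegularCompactLTTop] [q.OuterRegular] {D U : Set α}
    (hD : MeasurableSet D) (hU : IsOpen U) (hDU : D ⊆ U) (hqD : q D = 0) {ε : ℝ} (hε : 0 < ε) :
    ∃ f : C(α, ℝ), HasCompactSupport f ∧ (∀ x, f x ∈ Icc 0 1) ∧ Function.support f ⊆ U ∧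
      p.real D ≤ (∫ x, f x ∂p) - (∫ x, f x ∂q) + ε := by
  have hε2 : ENNReal.ofReal (ε / 2) ≠ 0 := by simpa using half_pos hε
  obtain ⟨K, hKD, hK, hpK⟩ := hD.exists_isCompact_lt_add (measure_ne_top p D) hε2
  obtain ⟨V, hKV, hV, hqV⟩ := Set.exists_isOpen_lt_of_lt K (ENNReal.ofReal (ε / 2))
    (by rw [measure_mono_null hKD hqD]; exact pos_iff_ne_zero.2 hε2)
  obtain ⟨f, hfK, hfUV, hf, hf01⟩ := exists_continuous_one_zero_of_isCompact hK
    (hU.inter hV).isClosed_compl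
    (disjoint_compl_right_iff_subset.2 (subset_inter (hKD.trans hDU) hKV))
  have hsupp : Function.support f ⊆ U ∩ V := fun x hx => not_not.1 fun h => hx (hfUV h)
  have hfint : ∀ m : Measure α, [IsFiniteMeasure m] → Integrable f m := fun m _ =>
    f.continuous.integrable_of_hasCompactSupport hf
  have hpf : p.real K ≤ ∫ x, f x ∂p := by
    rw [← integral_indicator_one hK.measurableSet]
    refine integral_mono ((integrable_const 1).indicator hK.measurableSet) (hfint p) fun x => ?_
    by_cases hx : x ∈ K
    · simp [hx, hfK hx]
    · simp [hx, (hf01 x).1]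
  have hqf : ∫ x, f x ∂q ≤ ε / 2 :=
    calc ∫ x, f x ∂q ≤ 1 * q.real V := (le_abs_self _).trans <| abs_integral_le_mul_measureReal
          (fun x => abs_le.2 ⟨by linarith [(hf01 x).1], (hf01 x).2⟩)
          (hsupp.trans inter_subset_right)
      _ ≤ ε / 2 := by rw [one_mul]; exact ENNReal.toReal_le_of_le_ofReal (by positivity) hqV.le
  have hpD : p.real D ≤ p.real K + ε / 2 := by
    have := ENNReal.toReal_mono (by finiteness) hpK.le
    rwa [ENNReal.toReal_add (measure_ne_top p K) ENNReal.ofReal_ne_top,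
      ENNReal.toReal_ofReal (by positivity)] at this
  refine ⟨f, hf, hf01, hsupp.trans inter_subset_left, by linarith⟩

end Bump

section IntegralCLM

variable {α : Type*} [TopologicalSpace α] [MeasurableSpace α] [OpensMeasurableSpace α]

noncomputable def MeasureTheory.SignedMeasure.integralCLM (ν : SignedMeasure α) :
    C₀(α, ℝ) →L[ℝ] ℝ :=
  LinearMap.mkContinuous
    { toFun := fun f => signedIntegral ν f
      map_add' := fun f g => signedIntegral_add ν (f.toBCF.integrable _) (g.toBCF.integrable _)
      map_smul' := fun c f => signedIntegral_const_mul ν c }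
    (ν.totalVariation.real univ) fun f => by
      rw [Real.norm_eq_abs, mul_comm]
      refine abs_signedIntegral_le ν (fun x => ?_) (subset_univ _)
      rw [← ZeroAtInftyContinuousMap.norm_toBCF_eq_norm]
      exact f.toBCF.norm_coe_le_norm x

end IntegralCLM

section ProperSpace

variable {α : Type*} [MetricSpace α] [ProperSpace α] [MeasurableSpace α] [BorelSpace α]

lemma MeasureTheory.SignedMeasure.exists_continuous_totalVariation_le (ν : SignedMeasure α)
    {U : Set α} (hU : IsOpen U) {ε : ℝ} (hε : 0 < ε) :
    ∃ f : C(α, ℝ), HasCompactSupport f ∧ (∀ x, |f x| ≤ 1) ∧ Function.support f ⊆ U ∧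
      ν.totalVariation.real U ≤ signedIntegral ν f + ε := by
  set p := ν.toJordanDecomposition.posPart
  set q := ν.toJordanDecomposition.negPart
  obtain ⟨S, hS, hpS, hqS⟩ := ν.toJordanDecomposition.mutuallySingular
  obtain ⟨f₁, hf₁, hf₁01, hf₁U, hpf₁⟩ :=
    exists_continuous_integral_sub_integral_ge (p := p) (q := q) (hU.measurableSet.diff hS) hU
      sdiff_subset (measure_mono_null (sdiff_subset_compl U S) hqS) (half_pos hε)
  obtain ⟨f₂, hf₂, hf₂01, hf₂U, hqf₂⟩ :=
    exists_continuous_integral_sub_integral_ge (p := q) (q := p) (hU.measurableSet.diff hS.compl)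
      hU sdiff_subset (measure_mono_null (sdiff_compl ▸ inter_subset_right) hpS) (half_pos hε)
  refine ⟨f₁ - f₂, hf₁.sub hf₂, fun x => ?_, ?_, ?_⟩
  · rw [ContinuousMap.sub_apply, abs_le]
    constructor <;> linarith [(hf₁01 x).1, (hf₁01 x).2, (hf₂01 x).1, (hf₂01 x).2]
  · exact (Function.support_sub _ _).trans (union_subset hf₁U hf₂U)
  · have hint : ∀ f : C(α, ℝ), HasCompactSupport f → Integrable f ν.totalVariation :=
      fun f hf => f.continuous.integrable_of_hasCompactSupport hf
    have hpU : p.real (U \ S) = p.real U := congrArg ENNReal.toReal (measure_sdiff_null hpS)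
    have hqU : q.real (U \ Sᶜ) = q.real U := congrArg ENNReal.toReal (measure_sdiff_null hqS)
    rw [ContinuousMap.coe_sub, signedIntegral_sub ν (hint f₁ hf₁) (hint f₂ hf₂),
      SignedMeasure.totalVariation_real_eq, ← hpU, ← hqU]
    simp only [signedIntegral]
    linarith

variable {μs : ℕ → SignedMeasure α} {μ : SignedMeasure α}

lemma isBoundedUnder_totalVariation_of_tendsto
    (hconv : ∀ f : α → ℝ, Continuous f → Tendsto f (cocompact α) (𝓝 0) →
      Tendsto (fun n => signedIntegral (μs n) f) atTop (𝓝 (signedIntegral μ f)))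
    (s : Set α) :
    IsBoundedUnder (· ≤ ·) atTop fun n => (μs n).totalVariation.real s := by
  obtain ⟨C, hC⟩ := banach_steinhaus (g := fun n => (μs n).integralCLM) fun F => by
    obtain ⟨C, hC⟩ := (hconv F F.continuous F.zero_at_infty').norm.bddAbove_range
    exact ⟨C, fun n => hC (mem_range_self n)⟩
  refine isBoundedUnder_of ⟨C + 1, fun n => ?_⟩
  obtain ⟨f, hf, hf1, -, hle⟩ := (μs n).exists_continuous_totalVariation_le isOpen_univ one_pos
  let F : C₀(α, ℝ) := ⟨f, hf.is_zero_at_infty⟩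
  have hF : ‖F‖ ≤ 1 := by
    rw [← ZeroAtInftyContinuousMap.norm_toBCF_eq_norm,
      BoundedContinuousFunction.norm_le zero_le_one]
    exact hf1
  calc (μs n).totalVariation.real s ≤ (μs n).totalVariation.real univ :=
        measureReal_mono (subset_univ s)
    _ ≤ (μs n).integralCLM F + 1 := hle
    _ ≤ ‖(μs n).integralCLM‖ * ‖F‖ + 1 := by
        gcongr
        exact (le_abs_self _).trans ((μs n).integralCLM.le_opNorm F)
    _ ≤ C + 1 := by
        gcongr
        exact (mul_le_of_le_one_right (norm_nonneg _) hF).trans (hC n)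

lemma totalVariation_real_le_limsup_of_tendsto
    (hconv : ∀ f : α → ℝ, Continuous f → Tendsto f (cocompact α) (𝓝 0) →
      Tendsto (fun n => signedIntegral (μs n) f) atTop (𝓝 (signedIntegral μ f)))
    {U : Set α} (hU : IsOpen U) :
    μ.totalVariation.real U ≤ limsup (fun n => (μs n).totalVariation.real U) atTop := by
  refine le_of_forall_pos_le_add fun ε hε => ?_
  obtain ⟨f, hf, hf1, hfU, hle⟩ := μ.exists_continuous_totalVariation_le hU hε
  have hlim := hconv f f.continuous hf.is_zero_at_infty
  have hbound : ∀ n, signedIntegral (μs n) f ≤ (μs n).totalVariation.real U := fun n =>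
    (le_abs_self _).trans ((abs_signedIntegral_le _ hf1 hfU).trans_eq (one_mul _))
  have : signedIntegral μ f ≤ limsup (fun n => (μs n).totalVariation.real U) atTop := by
    rw [← hlim.limsup_eq]
    exact limsup_le_limsup (Eventually.of_forall hbound)
      hlim.isBoundedUnder_ge.isCoboundedUnder_le (isBoundedUnder_totalVariation_of_tendsto hconv U)
  linarith

end ProperSpace

section Cutoff

variable {α : Type*} [PseudoMetricSpace α]

noncomputable def infDistCutoff (s : Set α) (R : ℝ) (x : α) : ℝ :=
  min (infDist x s / R) 1

lemma infDistCutoff_mem_Icc (s : Set α) {R : ℝ} (hR : 0 ≤ R) (x : α) :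
    infDistCutoff s R x ∈ Icc 0 1 :=
  ⟨le_min (div_nonneg infDist_nonneg hR) zero_le_one, min_le_right _ _⟩

lemma continuous_infDistCutoff (s : Set α) (R : ℝ) : Continuous (infDistCutoff s R) :=
  ((continuous_infDist_pt s).div_const R).min continuous_const

lemma infDistCutoff_of_mem {s : Set α} {R : ℝ} {x : α} (hx : x ∈ s) :
    infDistCutoff s R x = 0 := by
  simp [infDistCutoff, infDist_zero_of_mem hx]

lemma infDistCutoff_of_le_infDist {s : Set α} {R : ℝ} {x : α} (hR : 0 < R)
    (hx : R ≤ infDist x s) : infDistCutoff s R x = 1 :=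
  min_eq_right ((one_le_div hR).2 hx)

lemma continuous_mul_infDistCutoff {φ : α → ℝ} {s : Set α} {M : ℝ} (hM : ∀ x, |φ x| ≤ M)
    (hφs : {x | ¬ContinuousAt φ x} ⊆ s) (R : ℝ) :
    Continuous fun x => φ x * infDistCutoff s R x := by
  refine continuous_iff_continuousAt.2 fun c => ?_
  by_cases hc : c ∈ s
  · have hχ : Tendsto (infDistCutoff s R) (𝓝 c) (𝓝 0) :=
      infDistCutoff_of_mem hc ▸ (continuous_infDistCutoff s R).continuousAt
    rw [ContinuousAt, infDistCutoff_of_mem hc, mul_zero]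
    exact isBoundedUnder_le_mul_tendsto_zero (isBoundedUnder_of ⟨M, hM⟩) hχ
  · exact (not_not.1 (mt (@hφs c) hc)).mul (continuous_infDistCutoff s R).continuousAt

lemma abs_signedIntegral_sub_mul_infDistCutoff_le [MeasurableSpace α] [OpensMeasurableSpace α]
    (ν : SignedMeasure α) {φ : α → ℝ} (hφ : Measurable φ) {M : ℝ} (hM : ∀ x, |φ x| ≤ M)
    (s : Set α) {R : ℝ} (hR : 0 < R) :
    |signedIntegral ν φ - signedIntegral ν (fun x => φ x * infDistCutoff s R x)|
      ≤ M * ν.totalVariation.real {x | infDist x s < R} := by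
  have hχ := infDistCutoff_mem_Icc s hR.le
  have hφχ (x : α) : |φ x * infDistCutoff s R x| ≤ M := by
    rw [abs_mul]
    exact mul_le_of_le_one_right (abs_nonneg _) (abs_le.2 ⟨by linarith [(hχ x).1], (hχ x).2⟩)
      |>.trans (hM x)
  have hint : ∀ {f : α → ℝ}, Measurable f → (∀ x, |f x| ≤ M) → Integrable f ν.totalVariation :=
    fun hf hfM => .of_bound hf.aestronglyMeasurable M (.of_forall hfM)
  rw [← signedIntegral_sub ν (g := fun x => φ x * infDistCutoff s R x) (hint hφ hM)
    (hint (hφ.mul (continuous_infDistCutoff s R).measurable) hφχ)]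
  refine abs_signedIntegral_le ν (fun x => ?_) fun x hx => ?_
  · rw [Pi.sub_apply, ← mul_one_sub, abs_mul]
    exact mul_le_of_le_one_right (abs_nonneg _)
      (abs_le.2 ⟨by linarith [(hχ x).2], by linarith [(hχ x).1]⟩) |>.trans (hM x)
  · by_contra hxR
    exact hx (by simp [infDistCutoff_of_le_infDist hR (not_lt.1 hxR)])

end Cutoff

lemma tendsto_of_forall_approx {ι E : Type*} [PseudoMetricSpace E] {l : Filter ι} {u : ι → E}
    {a : E} (h : ∀ ε > 0, ∃ v : ι → E, ∃ b, Tendsto v l (𝓝 b) ∧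
      (∀ᶠ i in l, dist (u i) (v i) ≤ ε) ∧ dist b a ≤ ε) :
    Tendsto u l (𝓝 a) := by
  refine Metric.tendsto_nhds.2 fun ε hε => ?_
  obtain ⟨v, b, hv, huv, hba⟩ := h (ε / 4) (by positivity)
  filter_upwards [huv, Metric.tendsto_nhds.1 hv (ε / 4) (by positivity)] with i h₁ h₂
  linarith [dist_triangle4 (u i) (v i) b a]

theorem stmt_4_general (N : ℕ)
    (μn : ℕ → MeasureTheory.SignedMeasure (EuclideanSpace ℝ (Fin N)))
    (μ : MeasureTheory.SignedMeasure (EuclideanSpace ℝ (Fin N)))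
    (hconv : ∀ f : EuclideanSpace ℝ (Fin N) → ℝ, Continuous f →
      Tendsto f (cocompact (EuclideanSpace ℝ (Fin N))) (nhds 0) →
      Tendsto (fun n => signedIntegral (μn n) f) atTop (nhds (signedIntegral μ f)))
    (C : Set (EuclideanSpace ℝ (Fin N)))
    (hnc : ∀ δ > (0 : ℝ), ∃ R > (0 : ℝ),
      limsup (fun n => ((μn n).totalVariation {x | Metric.infDist x C < R}).toReal)
        atTop ≤ δ)
    (φ : EuclideanSpace ℝ (Fin N) → ℝ) (hφmeas : Measurable φ)
    (hφbdd : ∃ M, ∀ x, |φ x| ≤ M)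
    (hφvanish : ∀ δ > (0 : ℝ), ∃ K : Set (EuclideanSpace ℝ (Fin N)),
      IsCompact K ∧ ∀ x ∉ K, |φ x| ≤ δ)
    (hφdisc : {x | ¬ ContinuousAt φ x} ⊆ C) :
    Tendsto (fun n => signedIntegral (μn n) φ) atTop (nhds (signedIntegral μ φ)) := by
  obtain ⟨M, hM⟩ := hφbdd
  have hM0 : 0 ≤ M := (abs_nonneg _).trans (hM 0)
  have hφ0 : Tendsto φ (cocompact _) (𝓝 0) := by
    refine (hasBasis_cocompact.tendsto_iff nhds_basis_closedBall).2 fun δ hδ => ?_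
    obtain ⟨K, hK, hφK⟩ := hφvanish δ hδ
    exact ⟨K, hK, fun x hx => by simpa [Real.dist_eq] using hφK x hx⟩
  refine tendsto_of_forall_approx fun ε hε => ?_
  set δ := ε / (2 * (M + 1)) with hδdef
  have hδ : 0 < δ := div_pos hε (by positivity)
  obtain ⟨R, hR, hlim⟩ := hnc δ hδ
  have hΩ : IsOpen {x | infDist x C < R} := isOpen_lt (continuous_infDist_pt C) continuous_const
  have hψ0 : Tendsto (fun x => φ x * infDistCutoff C R x) (cocompact _) (𝓝 0) :=
    hφ0.zero_mul_isBoundedUnder_le <| isBoundedUnder_of ⟨1, fun x =>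
      abs_le.2 ⟨by linarith [(infDistCutoff_mem_Icc C hR.le x).1],
        (infDistCutoff_mem_Icc C hR.le x).2⟩⟩
  have hsmall (ν : SignedMeasure (EuclideanSpace ℝ (Fin N)))
      (hν : ν.totalVariation.real {x | infDist x C < R} ≤ 2 * δ) :
      dist (signedIntegral ν φ) (signedIntegral ν fun x => φ x * infDistCutoff C R x) ≤ ε := by
    refine (abs_signedIntegral_sub_mul_infDistCutoff_le ν hφmeas hM C hR).trans ?_
    calc M * ν.totalVariation.real {x | infDist x C < R}
        ≤ (M + 1) * (2 * δ) := by gcongr; linarith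
      _ = ε := by rw [hδdef]; field_simp
  refine ⟨_, _, hconv _ (continuous_mul_infDistCutoff hM hφdisc R) hψ0, ?_, ?_⟩
  · filter_upwards [eventually_lt_of_limsup_lt (hlim.trans_lt (by linarith : δ < 2 * δ))
      (isBoundedUnder_totalVariation_of_tendsto hconv _)] with n hn
    exact hsmall _ hn.le
  · rw [dist_comm]
    exact hsmall μ
      ((totalVariation_real_le_limsup_of_tendsto hconv hΩ).trans (hlim.trans (by linarith)))

/-- Proposition 3.11: weak-star convergence of finite signed Radon measures plus a
non-concentration hypothesis near a closed set `C` allows passing to the limit against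
bounded measurable test functions discontinuous only on `C` and vanishing at infinity. -/
theorem stmt_4 (N : ℕ) (hN : 1 ≤ N)
    (μn : ℕ → MeasureTheory.SignedMeasure (EuclideanSpace ℝ (Fin N)))
    (μ : MeasureTheory.SignedMeasure (EuclideanSpace ℝ (Fin N)))
    (hconv : ∀ f : EuclideanSpace ℝ (Fin N) → ℝ, Continuous f →
      Tendsto f (cocompact (EuclideanSpace ℝ (Fin N))) (nhds 0) →
      Tendsto (fun n => signedIntegral (μn n) f) atTop (nhds (signedIntegral μ f)))
    (C : Set (EuclideanSpace ℝ (Fin N))) (hC : IsClosed C)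
    (hnc : ∀ δ > (0 : ℝ), ∃ R > (0 : ℝ),
      limsup (fun n => ((μn n).totalVariation {x | Metric.infDist x C < R}).toReal)
        atTop ≤ δ)
    (φ : EuclideanSpace ℝ (Fin N) → ℝ) (hφmeas : Measurable φ)
    (hφbdd : ∃ M, ∀ x, |φ x| ≤ M)
    (hφvanish : ∀ δ > (0 : ℝ), ∃ K : Set (EuclideanSpace ℝ (Fin N)),
      IsCompact K ∧ ∀ x ∉ K, |φ x| ≤ δ)
    (hφdisc : {x | ¬ ContinuousAt φ x} ⊆ C) :
    Tendsto (fun n => signedIntegral (μn n) φ) atTop (nhds (signedIntegral μ φ)) :=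
  stmt_4_general N μn μ hconv C hnc φ hφmeas hφbdd hφvanish hφdisc
end

section
/- Let ε > 0 and r > 0, and set φ_ε(r) = (ε² + 3r²)^{−1/2} and φ_0(r) = 1/(√3 r) (the kernels for λ = 1/2, where c_{1/2} = 2^{1/(1/2)} − 1 = 3). Then 0 ≤ φ_0(r) − φ_ε(r) ≤ (ε^{1/2} / (√3 r)) · φ_ε(r)^{1/2}. -/
open Real

/-
With `s = √3 r` and `b = √(s² + ε²)` the two kernels are `1/s` and `1/b`, and
`1/s - 1/b = (b - s)/(s b)`. Since `s ≤ b ≤ s + ε` and `ε ≤ b`, we get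
`0 ≤ b - s ≤ ε = √ε √ε ≤ √ε √b`, which is the claimed bound after dividing by `s b`.
-/

namespace Real

variable {s ε : ℝ}

lemma le_sqrt_sq_add_sq (hs : 0 ≤ s) : s ≤ √(s ^ 2 + ε ^ 2) :=
  (le_sqrt hs (by positivity)).2 (by nlinarith [sq_nonneg ε])

lemma sqrt_sq_add_sq_le_add (hs : 0 ≤ s) (hε : 0 ≤ ε) : √(s ^ 2 + ε ^ 2) ≤ s + ε :=
  (sqrt_le_left (by positivity)).2 (by nlinarith)

lemma sqrt_sq_add_sq_sub_le_sqrt_mul (hs : 0 ≤ s) (hε : 0 ≤ ε) :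
    √(s ^ 2 + ε ^ 2) - s ≤ √ε * √√(s ^ 2 + ε ^ 2) := by
  have hεb : ε ≤ √(s ^ 2 + ε ^ 2) := by
    simpa [add_comm] using le_sqrt_sq_add_sq (s := ε) (ε := s) hε
  calc √(s ^ 2 + ε ^ 2) - s ≤ ε := by linarith [sqrt_sq_add_sq_le_add hs hε]
    _ = √ε * √ε := (mul_self_sqrt hε).symm
    _ ≤ √ε * √√(s ^ 2 + ε ^ 2) := by gcongr

lemma inv_sqrt_sq_add_sq_le_inv (hs : 0 < s) : (√(s ^ 2 + ε ^ 2))⁻¹ ≤ s⁻¹ :=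
  inv_anti₀ hs (le_sqrt_sq_add_sq hs.le)

lemma inv_sub_inv_sqrt_sq_add_sq_le (hs : 0 < s) (hε : 0 ≤ ε) :
    s⁻¹ - (√(s ^ 2 + ε ^ 2))⁻¹ ≤ √ε / s * (√√(s ^ 2 + ε ^ 2))⁻¹ := by
  set b := √(s ^ 2 + ε ^ 2)
  have hb : 0 < b := hs.trans_le (le_sqrt_sq_add_sq hs.le)
  calc s⁻¹ - b⁻¹ = (b - s) / (s * b) := by field_simp
    _ ≤ √ε * √b / (s * b) := by
      gcongr
      exact sqrt_sq_add_sq_sub_le_sqrt_mul hs.le hε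
    _ = √ε / s * (√b)⁻¹ := by
      field_simp
      rw [sq_sqrt hb.le]

lemma rpow_neg_one_half {x : ℝ} (hx : 0 ≤ x) : x ^ (-(1 / 2) : ℝ) = (√x)⁻¹ := by
  rw [rpow_neg hx, sqrt_eq_rpow]

end Real

/-- Kernel estimate from the proof of Corollary 3.13 (case λ = 1/2, c_{1/2} = 3):
for `ε > 0` and `r > 0`, with `φ_ε(r) = (ε² + 3r²)^{-1/2}` and `φ_0(r) = 1/(√3 r)`,
one has `0 ≤ φ_0(r) − φ_ε(r) ≤ (ε^{1/2}/(√3 r)) φ_ε(r)^{1/2}`. -/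
theorem stmt_5 (ε r : ℝ) (hε : 0 < ε) (hr : 0 < r) :
    0 ≤ 1 / (Real.sqrt 3 * r) - (ε ^ 2 + 3 * r ^ 2) ^ (-(1 / 2) : ℝ) ∧
    1 / (Real.sqrt 3 * r) - (ε ^ 2 + 3 * r ^ 2) ^ (-(1 / 2) : ℝ)
      ≤ Real.sqrt ε / (Real.sqrt 3 * r)
          * ((ε ^ 2 + 3 * r ^ 2) ^ (-(1 / 2) : ℝ)) ^ ((1 : ℝ) / 2) := by
  have hs : 0 < √3 * r := by positivity
  have hsum : ε ^ 2 + 3 * r ^ 2 = (√3 * r) ^ 2 + ε ^ 2 := by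
    rw [mul_pow, sq_sqrt (by norm_num)]
    ring
  rw [hsum, rpow_neg_one_half (by positivity), ← sqrt_eq_rpow, sqrt_inv, one_div]
  exact ⟨sub_nonneg.2 (inv_sqrt_sq_add_sq_le_inv hs),
    inv_sub_inv_sqrt_sq_add_sq_le hs hε.le⟩
end

section
/- Let N ≥ 1 be an integer, λ > 0, ε ≥ 0, R > 0, and let f : ℝ^N × ℝ^N → [0, ∞) be measurable with ∫∫ (1 + |v|) f(x, v) dx dv < ∞. Define ρ(x) = ∫_{ℝ^N} f(x, v) dv, j(x) = ∫_{ℝ^N} v f(x, v) dv, M = ∫∫ f(x, v) dx dv, and D = ∫∫∫∫ φ_ε(|x − y|) |v − w|² f(x, v) f(y, w) dx dy dv dw ∈ [0, ∞]. Then ∬_{|x − y| < R} |ρ(x) j(y) − j(x) ρ(y)| dx dy ≤ (ε² + c_λ R²)^{λ/2} · D^{1/2} · M, where |ρ(x) j(y) − j(x) ρ(y)| is the Euclidean norm in ℝ^N. -/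
/-!
Since `ρ(x) j(y) - ρ(y) j(x) = ∫∫ f(x,v) f(y,w) (w - v) dv dw`, the integrand is at most
`∫∫ f(x,v) f(y,w) |v - w| dv dw`, and it vanishes on the diagonal `x = y`. Off the diagonal write
`|v - w| = (φ_ε(|x-y|)^{1/2} |v - w|) · φ_ε(|x-y|)^{-1/2}` and apply Cauchy–Schwarz for the measure
`f(x,v) f(y,w)` on `{0 < |x - y| < R}`: the first factor gives `D^{1/2}`, and the second is at most
`(ε² + c_λ R²)^{λ/2} M` because `φ_ε(r)^{-1} = (ε² + c_λ r²)^λ` increases in `r`.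
-/

open MeasureTheory Real
open scoped ENNReal

theorem MeasureTheory.Integrable.of_one_add_norm_mul {α V : Type*} [MeasurableSpace α]
    {μ : Measure α} [NormedAddCommGroup V] {k : α → V} {g : α → ℝ}
    (h : Integrable (fun x => (1 + ‖k x‖) * g x) μ) (hg : AEStronglyMeasurable g μ) :
    Integrable g μ :=
  h.mono hg <| .of_forall fun x => by
    rw [norm_mul, Real.norm_of_nonneg (by positivity : (0 : ℝ) ≤ 1 + ‖k x‖)]
    exact le_mul_of_one_le_left (norm_nonneg _) (le_add_of_nonneg_right (norm_nonneg _))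

theorem MeasureTheory.Integrable.smul_of_one_add_norm_mul {α V : Type*} [MeasurableSpace α]
    {μ : Measure α} [NormedAddCommGroup V] [NormedSpace ℝ V] {k : α → V} {g : α → ℝ}
    (h : Integrable (fun x => (1 + ‖k x‖) * g x) μ) (hg : AEStronglyMeasurable g μ)
    (hk : AEStronglyMeasurable k μ) :
    Integrable (fun x => g x • k x) μ :=
  h.mono (hg.smul hk) <| .of_forall fun x => by
    rw [norm_mul, norm_smul, Real.norm_of_nonneg (by positivity : (0 : ℝ) ≤ 1 + ‖k x‖)]
    nlinarith [norm_nonneg (g x), norm_nonneg (k x)]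

theorem ofReal_norm_integral_smul_le {α V : Type*} [MeasurableSpace α] {μ : Measure α}
    [NormedAddCommGroup V] [NormedSpace ℝ V] {g : α → ℝ} (hg : 0 ≤ g) (F : α → V) :
    ENNReal.ofReal ‖∫ x, g x • F x ∂μ‖ ≤ ∫⁻ x, ENNReal.ofReal (g x * ‖F x‖) ∂μ := by
  rw [ofReal_norm]
  refine (enorm_integral_le_lintegral_enorm _).trans_eq (lintegral_congr fun x => ?_)
  rw [← ofReal_norm, norm_smul, Real.norm_of_nonneg (hg x)]

theorem ofReal_norm_integral_smul_integral_sub_le {V : Type*} [NormedAddCommGroup V]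
    [NormedSpace ℝ V] [CompleteSpace V] [MeasurableSpace V] {μ : Measure V} {g h : V → ℝ}
    (hg0 : 0 ≤ g) (hh0 : 0 ≤ h) (hg : Integrable g μ) (hgv : Integrable (fun v => g v • v) μ)
    (hh : Integrable h μ) (hhw : Integrable (fun w => h w • w) μ) :
    ENNReal.ofReal ‖(∫ v, g v ∂μ) • (∫ w, h w • w ∂μ) - (∫ w, h w ∂μ) • ∫ v, g v • v ∂μ‖
      ≤ ∫⁻ v, ∫⁻ w, ENNReal.ofReal (g v * h w * ‖v - w‖) ∂μ ∂μ := by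
  have inner (v : V) : ∫ w, h w • (w - v) ∂μ = (∫ w, h w • w ∂μ) - (∫ w, h w ∂μ) • v := by
    simp only [smul_sub]
    rw [integral_sub hhw (hh.smul_const v), integral_smul_const]
  have outer : (∫ v, g v ∂μ) • (∫ w, h w • w ∂μ) - (∫ w, h w ∂μ) • ∫ v, g v • v ∂μ
      = ∫ v, g v • ∫ w, h w • (w - v) ∂μ ∂μ := by
    simp_rw [inner, smul_sub, smul_comm (g _) (∫ w, h w ∂μ)]
    have hBgv : Integrable (fun v => (∫ w, h w ∂μ) • g v • v) μ := hgv.smul _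
    rw [integral_sub (hg.smul_const _) hBgv, integral_smul_const, integral_smul]
  rw [outer]
  refine (ofReal_norm_integral_smul_le hg0 _).trans (lintegral_mono fun v => ?_)
  calc ENNReal.ofReal (g v * ‖∫ w, h w • (w - v) ∂μ‖)
      = ENNReal.ofReal (g v) * ENNReal.ofReal ‖∫ w, h w • (w - v) ∂μ‖ :=
        ENNReal.ofReal_mul (hg0 v)
    _ ≤ ENNReal.ofReal (g v) * ∫⁻ w, ENNReal.ofReal (h w * ‖w - v‖) ∂μ := by
        gcongr; exact ofReal_norm_integral_smul_le hh0 _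
    _ = ∫⁻ w, ENNReal.ofReal (g v * h w * ‖v - w‖) ∂μ := by
        rw [← lintegral_const_mul' _ _ ENNReal.ofReal_ne_top]
        refine lintegral_congr fun w => ?_
        rw [← ENNReal.ofReal_mul (hg0 v), mul_assoc, norm_sub_rev]

theorem lintegral_prod_prod_eq_lintegral_lintegral_lintegral {X Y V W : Type*}
    [MeasurableSpace X] [MeasurableSpace Y] [MeasurableSpace V] [MeasurableSpace W]
    (μ : Measure X) (μ' : Measure Y) (ν : Measure V) (ν' : Measure W)
    [SFinite μ] [SFinite μ'] [SFinite ν] [SFinite ν']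
    {K : (X × V) × (Y × W) → ℝ≥0∞} (hK : Measurable K) :
    ∫⁻ q, K q ∂((μ.prod ν).prod (μ'.prod ν'))
      = ∫⁻ p, ∫⁻ v, ∫⁻ w, K ((p.1, v), (p.2, w)) ∂ν' ∂ν ∂(μ.prod μ') := by
  rw [lintegral_prod _ hK.aemeasurable, lintegral_prod _ (by fun_prop),
    lintegral_prod _ (by fun_prop)]
  refine lintegral_congr fun x => ?_
  have hKx : Measurable fun q : (V × Y) × W => K ((x, q.1.1), (q.1.2, q.2)) := by fun_prop
  calc ∫⁻ v, ∫⁻ yw, K ((x, v), yw) ∂(μ'.prod ν') ∂ν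
      = ∫⁻ v, ∫⁻ y, ∫⁻ w, K ((x, v), (y, w)) ∂ν' ∂μ' ∂ν :=
        lintegral_congr fun v => lintegral_prod _ (by fun_prop)
    _ = _ := lintegral_lintegral_swap hKx.lintegral_prod_right'.aemeasurable

theorem lintegral_le_rpow_mul_rpow_of_sq_le_mul {α : Type*} [MeasurableSpace α]
    {μ : Measure α} {u a b : α → ℝ≥0∞} (ha : AEMeasurable a μ) (hb : AEMeasurable b μ)
    (h : ∀ x, u x ^ 2 ≤ a x * b x) :
    ∫⁻ x, u x ∂μ ≤ (∫⁻ x, a x ∂μ) ^ ((1 : ℝ) / 2) * (∫⁻ x, b x ∂μ) ^ ((1 : ℝ) / 2) := by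
  refine le_trans (lintegral_mono fun x => ?_) (ENNReal.lintegral_mul_norm_pow_le ha hb
    (by norm_num) (by norm_num) (by norm_num))
  rw [← ENNReal.mul_rpow_of_nonneg _ _ (by norm_num), one_div,
    ← ENNReal.pow_rpow_inv_natCast two_ne_zero (u x)]
  exact ENNReal.rpow_le_rpow (h x) (by norm_num)

theorem one_le_rpow_neg_mul_rpow {φ s lam : ℝ} (hφ : 0 < φ) (hφs : φ ≤ s) (hlam : 0 ≤ lam) :
    1 ≤ φ ^ (-lam) * s ^ lam := by
  rw [rpow_neg hφ.le, ← div_eq_inv_mul, ← div_rpow (hφ.le.trans hφs) hφ.le]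
  exact one_le_rpow ((one_le_div hφ).2 hφs) hlam

theorem ofReal_mul_sq_le_rpow_neg_mul_rpow {ε c lam R d t P : ℝ} (hc : 0 < c) (hlam : 0 ≤ lam)
    (hd : d ∈ Set.Ioo 0 R) (ht : 0 ≤ t) (hP : 0 ≤ P) :
    ENNReal.ofReal (P * t) ^ 2 ≤ ENNReal.ofReal ((ε ^ 2 + c * d ^ 2) ^ (-lam) * t ^ 2 * P)
      * (ENNReal.ofReal ((ε ^ 2 + c * R ^ 2) ^ lam) * ENNReal.ofReal P) := by
  have hφ : 0 < ε ^ 2 + c * d ^ 2 := by have := hd.1; positivity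
  have hφs : ε ^ 2 + c * d ^ 2 ≤ ε ^ 2 + c * R ^ 2 := by have := hd.1.le; gcongr; exact hd.2.le
  rw [← ENNReal.ofReal_pow (by positivity), ← ENNReal.ofReal_mul (by positivity),
    ← ENNReal.ofReal_mul (by positivity)]
  refine ENNReal.ofReal_le_ofReal ?_
  calc (P * t) ^ 2 = 1 * (P * t) ^ 2 := (one_mul _).symm
    _ ≤ (ε ^ 2 + c * d ^ 2) ^ (-lam) * (ε ^ 2 + c * R ^ 2) ^ lam * (P * t) ^ 2 := by
        gcongr; exact one_le_rpow_neg_mul_rpow hφ hφs hlam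
    _ = _ := by ring

theorem lintegral_prod_ofReal_mul_eq_sq {α : Type*} [MeasurableSpace α] {μ : Measure α}
    [SFinite μ] {f : α → ℝ} (hf0 : 0 ≤ f) (hf : Integrable f μ) :
    ∫⁻ q, ENNReal.ofReal (f q.1 * f q.2) ∂(μ.prod μ) = ENNReal.ofReal (∫ x, f x ∂μ) ^ 2 := by
  simp_rw [ENNReal.ofReal_mul (hf0 _)]
  rw [lintegral_prod_mul hf.aemeasurable.ennreal_ofReal hf.aemeasurable.ennreal_ofReal,
    ofReal_integral_eq_lintegral_ofReal hf (.of_forall hf0), sq]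

theorem setLIntegral_norm_sub_lt_le_of_diag_eq_zero {X : Type*} [NormedAddCommGroup X]
    [MeasurableSpace X] [BorelSpace X] [SecondCountableTopology X] {μ : Measure (X × X)}
    {g : X × X → ℝ≥0∞} (hg : ∀ x, g (x, x) = 0) (R : ℝ) :
    ∫⁻ p in {p : X × X | ‖p.1 - p.2‖ < R}, g p ∂μ
      ≤ ∫⁻ p in {p : X × X | ‖p.1 - p.2‖ ∈ Set.Ioo 0 R}, g p ∂μ := by
  have hT : MeasurableSet {p : X × X | ‖p.1 - p.2‖ ∈ Set.Ioo 0 R} :=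
    measurableSet_Ioo.preimage (by fun_prop)
  rw [← lintegral_indicator hT]
  refine (setLIntegral_mono' (measurableSet_lt (by fun_prop) measurable_const)
    fun p hp => ?_).trans (setLIntegral_le_lintegral _ _)
  obtain ⟨x, y⟩ := p
  by_cases hxy : x = y
  · simp [hxy, hg]
  · have hpT : (x, y) ∈ {p : X × X | ‖p.1 - p.2‖ ∈ Set.Ioo 0 R} :=
      ⟨norm_pos_iff.2 (sub_ne_zero.2 hxy), hp⟩
    rw [Set.indicator_of_mem hpT]

section KineticMoments

variable {X V : Type*} [MeasurableSpace X] [NormedAddCommGroup V] [NormedSpace ℝ V]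
  [MeasurableSpace V]

noncomputable def density (ν : Measure V) (f : X × V → ℝ) (x : X) : ℝ := ∫ v, f (x, v) ∂ν

noncomputable def current (ν : Measure V) (f : X × V → ℝ) (x : X) : V := ∫ v, f (x, v) • v ∂ν

theorem setLIntegral_norm_density_smul_current_sub_le [CompleteSpace V] [BorelSpace V]
    [SecondCountableTopology V] {μ : Measure X} {ν : Measure V} [SFinite μ] [SFinite ν]
    {f : X × V → ℝ} (hf0 : 0 ≤ f) (hfm : Measurable f)
    (hfint : Integrable (fun q => (1 + ‖q.2‖) * f q) (μ.prod ν))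
    {T : Set (X × X)} (hT : MeasurableSet T) :
    ∫⁻ p in T, ENNReal.ofReal
        ‖density ν f p.1 • current ν f p.2 - density ν f p.2 • current ν f p.1‖ ∂(μ.prod μ)
      ≤ ∫⁻ q, {q : (X × V) × (X × V) | (q.1.1, q.2.1) ∈ T}.indicator
          (fun q => ENNReal.ofReal (f q.1 * f q.2 * ‖q.1.2 - q.2.2‖)) q
          ∂((μ.prod ν).prod (μ.prod ν)) := by
  have hgood : ∀ᵐ x ∂μ, Integrable (fun v => (1 + ‖v‖) * f (x, v)) ν := hfint.prod_right_ae
  have hbound : ∀ᵐ p ∂(μ.prod μ),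
      ENNReal.ofReal ‖density ν f p.1 • current ν f p.2 - density ν f p.2 • current ν f p.1‖
        ≤ ∫⁻ v, ∫⁻ w, ENNReal.ofReal (f (p.1, v) * f (p.2, w) * ‖v - w‖) ∂ν ∂ν := by
    filter_upwards [(Measure.quasiMeasurePreserving_fst.ae hgood).and
      (Measure.quasiMeasurePreserving_snd.ae hgood)] with p ⟨hx, hy⟩
    have hm (x : X) : AEStronglyMeasurable (fun v => f (x, v)) ν :=
      (hfm.comp measurable_prodMk_left).aestronglyMeasurable
    exact ofReal_norm_integral_smul_integral_sub_le (fun _ => hf0 _) (fun _ => hf0 _)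
      (hx.of_one_add_norm_mul (hm _)) (hx.smul_of_one_add_norm_mul (hm _) aestronglyMeasurable_id)
      (hy.of_one_add_norm_mul (hm _)) (hy.smul_of_one_add_norm_mul (hm _) aestronglyMeasurable_id)
  have hK : Measurable ({q : (X × V) × (X × V) | (q.1.1, q.2.1) ∈ T}.indicator
      fun q => ENNReal.ofReal (f q.1 * f q.2 * ‖q.1.2 - q.2.2‖)) :=
    (by fun_prop : Measurable _).indicator (hT.preimage (by fun_prop))
  rw [lintegral_prod_prod_eq_lintegral_lintegral_lintegral _ _ _ _ hK,
    ← lintegral_indicator hT]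
  refine lintegral_mono_ae (hbound.mono fun p hp => ?_)
  by_cases hpT : p ∈ T
  · simpa [hpT] using hp
  · simp [hpT]

theorem setLIntegral_norm_density_smul_current_sub_le_sqrt_dissipation [NormedAddCommGroup X]
    [BorelSpace X] [SecondCountableTopology X] [CompleteSpace V] [BorelSpace V]
    [SecondCountableTopology V] {μ : Measure X} {ν : Measure V} [SFinite μ] [SFinite ν]
    {f : X × V → ℝ} (hf0 : 0 ≤ f) (hfm : Measurable f)
    (hfint : Integrable (fun q => (1 + ‖q.2‖) * f q) (μ.prod ν)) {ε c lam R : ℝ} (hc : 0 < c)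
    (hlam : 0 ≤ lam) :
    ∫⁻ p in {p : X × X | ‖p.1 - p.2‖ < R}, ENNReal.ofReal
        ‖density ν f p.1 • current ν f p.2 - density ν f p.2 • current ν f p.1‖ ∂(μ.prod μ)
      ≤ ENNReal.ofReal ((ε ^ 2 + c * R ^ 2) ^ (lam / 2))
        * (∫⁻ q, ENNReal.ofReal ((ε ^ 2 + c * ‖q.1.1 - q.2.1‖ ^ 2) ^ (-lam)
            * ‖q.1.2 - q.2.2‖ ^ 2 * (f q.1 * f q.2)) ∂((μ.prod ν).prod (μ.prod ν))) ^ ((1 : ℝ) / 2)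
        * ENNReal.ofReal (∫ q, f q ∂(μ.prod ν)) := by
  set s := ε ^ 2 + c * R ^ 2
  set T := {p : X × X | ‖p.1 - p.2‖ ∈ Set.Ioo 0 R}
  have hT : MeasurableSet T := measurableSet_Ioo.preimage (by fun_prop)
  have hfi : Integrable f (μ.prod ν) := hfint.of_one_add_norm_mul hfm.aestronglyMeasurable
  have hs : 0 ≤ s := by positivity
  calc _ ≤ ∫⁻ p in T, ENNReal.ofReal
          ‖density ν f p.1 • current ν f p.2 - density ν f p.2 • current ν f p.1‖ ∂(μ.prod μ) :=
        -- the diagonal is discarded: there `φ_0` is singular (and `0 ^ (-lam) = 0` in `rpow`),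
        -- while the integrand vanishes
        setLIntegral_norm_sub_lt_le_of_diag_eq_zero (fun x => by simp) R
    _ ≤ ∫⁻ q, {q : (X × V) × (X × V) | (q.1.1, q.2.1) ∈ T}.indicator
          (fun q => ENNReal.ofReal (f q.1 * f q.2 * ‖q.1.2 - q.2.2‖)) q
          ∂((μ.prod ν).prod (μ.prod ν)) :=
        setLIntegral_norm_density_smul_current_sub_le hf0 hfm hfint hT
    _ ≤ (∫⁻ q, ENNReal.ofReal ((ε ^ 2 + c * ‖q.1.1 - q.2.1‖ ^ 2) ^ (-lam)
            * ‖q.1.2 - q.2.2‖ ^ 2 * (f q.1 * f q.2)) ∂((μ.prod ν).prod (μ.prod ν))) ^ ((1 : ℝ) / 2)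
          * (∫⁻ q, ENNReal.ofReal (s ^ lam) * ENNReal.ofReal (f q.1 * f q.2)
            ∂((μ.prod ν).prod (μ.prod ν))) ^ ((1 : ℝ) / 2) := by
        refine lintegral_le_rpow_mul_rpow_of_sq_le_mul (by fun_prop) (by fun_prop) fun q => ?_
        by_cases hq : q ∈ {q : (X × V) × (X × V) | (q.1.1, q.2.1) ∈ T}
        · rw [Set.indicator_of_mem hq]
          exact ofReal_mul_sq_le_rpow_neg_mul_rpow hc hlam hq (norm_nonneg _)
            (mul_nonneg (hf0 _) (hf0 _))
        · simp [Set.indicator_of_notMem hq]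
    _ = _ := by
        rw [lintegral_const_mul' _ _ ENNReal.ofReal_ne_top,
          lintegral_prod_ofReal_mul_eq_sq hf0 hfi, ENNReal.mul_rpow_of_nonneg _ _ (by norm_num),
          ENNReal.ofReal_rpow_of_nonneg (rpow_nonneg hs _) (by norm_num), ← rpow_mul hs,
          ← ENNReal.rpow_two, ← ENNReal.rpow_mul]
        norm_num
        rw [mul_one_div]
        ring

end KineticMoments

theorem stmt_13_general (N : ℕ) (lam : ℝ) (hlam : 0 < lam)
    (ε : ℝ) (R : ℝ)
    (f : EuclideanSpace ℝ (Fin N) × EuclideanSpace ℝ (Fin N) → ℝ)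
    (hf0 : ∀ q, 0 ≤ f q) (hfmeas : Measurable f)
    (hfint : Integrable (fun q : EuclideanSpace ℝ (Fin N) × EuclideanSpace ℝ (Fin N) =>
      (1 + ‖q.2‖) * f q))
    (ρ : EuclideanSpace ℝ (Fin N) → ℝ) (hρ : ∀ x, ρ x = ∫ v, f (x, v))
    (j : EuclideanSpace ℝ (Fin N) → EuclideanSpace ℝ (Fin N))
    (hj : ∀ x, j x = ∫ v, f (x, v) • v)
    (M : ℝ) (hM : M = ∫ q, f q)
    (D : ℝ≥0∞)
    (hD : D = ∫⁻ q : (EuclideanSpace ℝ (Fin N) × EuclideanSpace ℝ (Fin N)) ×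
        (EuclideanSpace ℝ (Fin N) × EuclideanSpace ℝ (Fin N)),
      ENNReal.ofReal ((ε ^ 2 + ((2 : ℝ) ^ (1 / lam) - 1) * ‖q.1.1 - q.2.1‖ ^ 2) ^ (-lam)
        * ‖q.1.2 - q.2.2‖ ^ 2 * (f q.1 * f q.2))) :
    (∫⁻ q : EuclideanSpace ℝ (Fin N) × EuclideanSpace ℝ (Fin N)
        in {q | ‖q.1 - q.2‖ < R},
      ENNReal.ofReal ‖ρ q.1 • j q.2 - ρ q.2 • j q.1‖)
      ≤ ENNReal.ofReal ((ε ^ 2 + ((2 : ℝ) ^ (1 / lam) - 1) * R ^ 2) ^ (lam / 2))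
          * D ^ ((1 : ℝ) / 2) * ENNReal.ofReal M := by
  obtain rfl : ρ = density volume f := funext hρ
  obtain rfl : j = current volume f := funext hj
  subst hM hD
  exact setLIntegral_norm_density_smul_current_sub_le_sqrt_dissipation hf0 hfmeas hfint
    (sub_pos.2 (one_lt_rpow one_lt_two (by positivity))) hlam.le

/-- The non-concentration inequality from the proof of Lemma 3.10: with
`φ_ε(r) = (ε² + c_λ r²)^{-λ}`, `c_λ = 2^{1/λ} − 1`, density `ρ`, current `j`, mass `M`
and alignment dissipation `D` of a nonnegative particle distribution `f`, one has
`∬_{|x−y|<R} |ρ(x) j(y) − j(x) ρ(y)| dx dy ≤ (ε² + c_λ R²)^{λ/2} D^{1/2} M`. -/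
theorem stmt_13 (N : ℕ) (hN : 1 ≤ N) (lam : ℝ) (hlam : 0 < lam)
    (ε : ℝ) (hε : 0 ≤ ε) (R : ℝ) (hR : 0 < R)
    (f : EuclideanSpace ℝ (Fin N) × EuclideanSpace ℝ (Fin N) → ℝ)
    (hf0 : ∀ q, 0 ≤ f q) (hfmeas : Measurable f)
    (hfint : Integrable (fun q : EuclideanSpace ℝ (Fin N) × EuclideanSpace ℝ (Fin N) =>
      (1 + ‖q.2‖) * f q))
    (ρ : EuclideanSpace ℝ (Fin N) → ℝ) (hρ : ∀ x, ρ x = ∫ v, f (x, v))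
    (j : EuclideanSpace ℝ (Fin N) → EuclideanSpace ℝ (Fin N))
    (hj : ∀ x, j x = ∫ v, f (x, v) • v)
    (M : ℝ) (hM : M = ∫ q, f q)
    (D : ℝ≥0∞)
    (hD : D = ∫⁻ q : (EuclideanSpace ℝ (Fin N) × EuclideanSpace ℝ (Fin N)) ×
        (EuclideanSpace ℝ (Fin N) × EuclideanSpace ℝ (Fin N)),
      ENNReal.ofReal ((ε ^ 2 + ((2 : ℝ) ^ (1 / lam) - 1) * ‖q.1.1 - q.2.1‖ ^ 2) ^ (-lam)
        * ‖q.1.2 - q.2.2‖ ^ 2 * (f q.1 * f q.2))) :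
    (∫⁻ q : EuclideanSpace ℝ (Fin N) × EuclideanSpace ℝ (Fin N)
        in {q | ‖q.1 - q.2‖ < R},
      ENNReal.ofReal ‖ρ q.1 • j q.2 - ρ q.2 • j q.1‖)
      ≤ ENNReal.ofReal ((ε ^ 2 + ((2 : ℝ) ^ (1 / lam) - 1) * R ^ 2) ^ (lam / 2))
          * D ^ ((1 : ℝ) / 2) * ENNReal.ofReal M :=
  stmt_13_general N lam hlam ε R f hf0 hfmeas hfint ρ hρ j hj M hM D hD
end
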